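/- arXiv:1611.06617 — 4 statements merged into one kernel-verified Lean document; each statement's English description precedes it below -/
import Mathlib

section
/- Let H be a group acting on a set D, let 𝒮 := {k ∈ H : k·x = x for some x ∈ D} be the set of stabilizers, and let H₁, H₂ ≤ H be subgroups such that H₁ acts freely on D (i.e., h·x = x with h ∈ H₁ implies h = 1). Consider the map ψ : D → D/H₁ × D/H₂ sending x to the pair of its orbits (H₁x, H₂x). Then ψ is injective if and only if H₂·(H₁ ∖ {1}) ∩ 𝒮 = ∅, i.e., if and only if for every h₁ ∈ H₁ with h₁ ≠ 1 and every h₂ ∈ H₂, the element h₂h₁ has no fixed point in D. -/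
/-!
`ψ x = ψ y` means `y = h₁ • x = h₂ • x` with `hᵢ ∈ Hᵢ`, i.e. `y = h₁ • x` where `h₂⁻¹ * h₁` fixes
`x`. So `ψ` is injective iff whenever `h₂ * h₁` has a fixed point `x`, already `h₁` fixes `x`;
since `H₁` acts freely, that means `h₁ = 1`.
-/

/-- The set of elements of `H` having a fixed point in `D` (the "stabilizers"). -/
def stabSet (H D : Type*) [Group H] [MulAction H D] : Set H :=
  {k : H | ∃ x : D, k • x = x}

/-- The orbit of `x ∈ D` under a subgroup `K ≤ H`. -/
def subOrbit {H : Type*} (D : Type*) [Group H] [MulAction H D] (K : Subgroup H) (x : D) :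
    Set D :=
  {y : D | ∃ k ∈ K, k • x = y}

section

variable {H D : Type*} [Group H] [MulAction H D]

theorem subOrbit_eq_orbit (K : Subgroup H) (x : D) :
    subOrbit D K x = MulAction.orbit K x := by
  ext y
  simp [subOrbit, MulAction.mem_orbit_iff, Subgroup.smul_def]

theorem subOrbit_eq_subOrbit_iff {K : Subgroup H} {x y : D} :
    subOrbit D K y = subOrbit D K x ↔ ∃ k ∈ K, k • x = y := by
  rw [subOrbit_eq_orbit, subOrbit_eq_orbit, MulAction.orbit_eq_iff, ← subOrbit_eq_orbit]
  rfl

theorem injective_subOrbit_pair_iff (H₁ H₂ : Subgroup H) :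
    Function.Injective (fun x : D ↦ (subOrbit D H₁ x, subOrbit D H₂ x)) ↔
      ∀ h₁ ∈ H₁, ∀ h₂ ∈ H₂, ∀ x : D, (h₂ * h₁) • x = x → h₁ • x = x := by
  simp only [Function.Injective, Prod.mk.injEq]
  constructor
  · intro hinj h₁ h₁mem h₂ h₂mem x hfix
    rw [mul_smul] at hfix
    exact hinj ⟨subOrbit_eq_subOrbit_iff.2 ⟨h₁, h₁mem, rfl⟩,
      subOrbit_eq_subOrbit_iff.2 ⟨h₂⁻¹, H₂.inv_mem h₂mem, inv_smul_eq_iff.2 hfix.symm⟩⟩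
  · rintro hfix x y ⟨hy₁, hy₂⟩
    obtain ⟨h₁, h₁mem, rfl⟩ := subOrbit_eq_subOrbit_iff.1 hy₁.symm
    obtain ⟨h₂, h₂mem, hx⟩ := subOrbit_eq_subOrbit_iff.1 hy₂.symm
    refine (hfix h₁ h₁mem h₂⁻¹ (H₂.inv_mem h₂mem) x ?_).symm
    rw [mul_smul, inv_smul_eq_iff, hx]

end

theorem psi_injective_iff (H D : Type*) [Group H] [MulAction H D]
    (H₁ H₂ : Subgroup H)
    (hfree : ∀ h ∈ H₁, ∀ x : D, h • x = x → h = 1)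
    (ψ : D → Set D × Set D)
    (hψ : ∀ x : D, ψ x = (subOrbit D H₁ x, subOrbit D H₂ x)) :
    Function.Injective ψ ↔
      ∀ h₁ ∈ H₁, h₁ ≠ 1 → ∀ h₂ ∈ H₂, ∀ x : D, (h₂ * h₁) • x ≠ x := by
  obtain rfl : ψ = fun x ↦ (subOrbit D H₁ x, subOrbit D H₂ x) := funext hψ
  have fixes_iff : ∀ h₁ ∈ H₁, ∀ x : D, h₁ • x = x ↔ h₁ = 1 := fun h₁ h₁mem x ↦
    ⟨hfree h₁ h₁mem x, fun h ↦ h ▸ one_smul H x⟩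
  rw [injective_subOrbit_pair_iff]
  refine forall₂_congr fun h₁ h₁mem ↦ ?_
  simp only [fixes_iff h₁ h₁mem, ne_eq]
  tauto
end

section
/- Let n ≥ 4 be a natural number and let m₀, m₁, m₂, m₃ be natural numbers with 1 ≤ mⱼ ≤ n − 3 for each j and m₀ + m₁ + m₂ + m₃ = n. Suppose j is a natural number with j·(m₀ + m₃) ≡ n − 1 (mod n). Define m′ⱼ := (j·mⱼ) mod n for each j. Then m′₀ + m′₃ = n − 1 and m′₀ + m′₁ + m′₂ + m′₃ = 2n. -/
lemma pair_mod_key (n a d r : ℕ) (ha : a < n) (hd : d < n)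
    (h : (a + d) % n = r) (hr : r < n) : a + d = r ∨ a + d = n + r := by
  rcases lt_or_ge (a + d) n with h1 | h1
  · left; rwa [Nat.mod_eq_of_lt h1] at h
  · right
    rw [Nat.mod_eq_sub_mod h1, Nat.mod_eq_of_lt (by omega)] at h
    omega

theorem conjugate_character_exponents (n : ℕ) (hn : 4 ≤ n) (m : Fin 4 → ℕ)
    (hm1 : ∀ j, 1 ≤ m j) (hm2 : ∀ j, m j ≤ n - 3)
    (hsum : m 0 + m 1 + m 2 + m 3 = n)
    (j : ℕ) (hj : j * (m 0 + m 3) ≡ n - 1 [MOD n]) :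
    (j * m 0) % n + (j * m 3) % n = n - 1 ∧
    (j * m 0) % n + (j * m 1) % n + (j * m 2) % n + (j * m 3) % n = 2 * n := by
  haveI : NeZero n := ⟨by omega⟩
  have hn0 : 0 < n := by omega
  have hcast1 : ((n - 1 : ℕ) : ZMod n) = -1 := by
    rw [Nat.cast_sub (by omega), ZMod.natCast_self, Nat.cast_one]; ring
  have hzj : (j : ZMod n) * ((m 0 : ZMod n) + (m 3 : ZMod n)) = -1 := by
    have h := (ZMod.natCast_eq_natCast_iff _ _ _).mpr hj
    rw [hcast1] at h
    push_cast at h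
    exact h
  -- j is a unit mod n
  have hu : IsUnit (j : ZMod n) := by
    refine IsUnit.of_mul_eq_one (-(((m 0 : ZMod n)) + (m 3 : ZMod n))) ?_
    rw [mul_neg, hzj, neg_neg]
  -- each j * m k is nonzero mod n
  have hne : ∀ k, (j * m k) % n ≠ 0 := by
    intro k hk
    have h0 : ((j * m k : ℕ) : ZMod n) = 0 :=
      (ZMod.natCast_eq_zero_iff _ _).mpr (Nat.dvd_of_mod_eq_zero hk)
    push_cast at h0
    have hmk : ((m k : ℕ) : ZMod n) = 0 :=
      hu.mul_left_cancel (show (j : ZMod n) * (m k : ZMod n) = (j : ZMod n) * 0 by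
        rw [mul_zero]; exact h0)
    have hdvd : n ∣ m k := (ZMod.natCast_eq_zero_iff _ _).mp hmk
    have := Nat.le_of_dvd (by have := hm1 k; omega) hdvd
    have := hm2 k
    have := hm1 k
    omega
  -- sum of all four is 0 mod n
  have hs : ((m 0 : ZMod n) + (m 1 : ZMod n) + (m 2 : ZMod n) + (m 3 : ZMod n)) = 0 := by
    have h : ((m 0 + m 1 + m 2 + m 3 : ℕ) : ZMod n) = ((n : ℕ) : ZMod n) := by
      rw [hsum]
    push_cast at h
    rw [ZMod.natCast_self] at h
    exact h
  have hz2 : (j : ZMod n) * ((m 1 : ZMod n) + (m 2 : ZMod n)) = 1 := by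
    linear_combination (j : ZMod n) * hs - hzj
  -- convert back to nat mod facts
  have hbc : (j * (m 1 + m 2)) % n = 1 := by
    have h : ((j * (m 1 + m 2) : ℕ) : ZMod n) = ((1 : ℕ) : ZMod n) := by
      push_cast; rw [hz2]
    have h2 := (ZMod.natCast_eq_natCast_iff _ _ _).mp h
    have h3 : (1 : ℕ) % n = 1 := Nat.mod_eq_of_lt (by omega)
    unfold Nat.ModEq at h2
    omega
  have had : (j * (m 0 + m 3)) % n = n - 1 := by
    have h3 : (n - 1) % n = n - 1 := Nat.mod_eq_of_lt (by omega)
    unfold Nat.ModEq at hj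
    omega
  -- split into the four remainders
  have hA : ((j * m 0) % n + (j * m 3) % n) % n = n - 1 := by
    rw [← Nat.add_mod, ← Nat.mul_add]; exact had
  have hB : ((j * m 1) % n + (j * m 2) % n) % n = 1 := by
    rw [← Nat.add_mod, ← Nat.mul_add]; exact hbc
  have l0 : (j * m 0) % n < n := Nat.mod_lt _ hn0
  have l1 : (j * m 1) % n < n := Nat.mod_lt _ hn0
  have l2 : (j * m 2) % n < n := Nat.mod_lt _ hn0
  have l3 : (j * m 3) % n < n := Nat.mod_lt _ hn0
  have e0 := hne 0
  have e1 := hne 1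
  have e2 := hne 2
  have e3 := hne 3
  have kA := pair_mod_key n _ _ _ l0 l3 hA (by omega)
  have kB := pair_mod_key n _ _ _ l1 l2 hB (by omega)
  omega
end

section
/- Let T = [[1,1],[0,1]] ∈ SL(2, ℤ) be the standard transvection (Picard–Lefschetz transformation). Then for every nonzero integer k, the power T^k is not a commutator in SL(2, ℤ); that is, there exist no A, B ∈ SL(2, ℤ) with T^k = A B A⁻¹ B⁻¹. -/
/-- The standard transvection (Picard–Lefschetz transformation) in `SL(2, ℤ)`. -/
def transvection : Matrix.SpecialLinearGroup (Fin 2) ℤ :=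
  ⟨!![1, 1; 0, 1], by norm_num [Matrix.det_fin_two_of]⟩

/-!
If `T ^ k = A * B * A⁻¹ * B⁻¹`, then `A * B = T ^ k * (B * A)`. Since `A * B` and `B * A` have the
same trace and left multiplication by `T ^ k` adds `k` times the lower left entry to the trace,
`C = B * A` is upper triangular, hence `C = ± T ^ m`. Then `A` conjugates `T ^ m` to `T ^ (k + m)`.
Comparing entries, either the lower left entry of `A` vanishes, so that `A = ± T ^ b` commutes
with `T`, or `m = k + m = 0`; either way `k = 0`.
-/

open ModularGroup
open scoped MatrixGroups

lemma transvection_eq_T : transvection = T := by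
  ext i j; rfl

namespace ModularGroup

lemma trace_T_zpow_mul (n : ℤ) (g : SL(2, ℤ)) :
    ((T ^ n * g : SL(2, ℤ)) : Matrix (Fin 2) (Fin 2) ℤ).trace =
      (g : Matrix (Fin 2) (Fin 2) ℤ).trace + n * g 1 0 := by
  rw [Matrix.SpecialLinearGroup.coe_mul, coe_T_zpow, Matrix.trace_fin_two, Matrix.trace_fin_two]
  simp [Matrix.mul_apply, Fin.sum_univ_two, add_right_comm]

lemma exists_eq_T_zpow_or_neg_of_c_eq_zero {g : SL(2, ℤ)} (hc : g 1 0 = 0) :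
    ∃ n : ℤ, g = T ^ n ∨ g = -T ^ n := by
  have had : g 0 0 * g 1 1 = 1 := by
    have := g.det_coe
    rwa [Matrix.det_fin_two, hc, mul_zero, sub_zero] at this
  rcases Int.eq_one_or_neg_one_of_mul_eq_one' had with ⟨ha, hd⟩ | ⟨ha, hd⟩
  · refine ⟨g 0 1, Or.inl ?_⟩
    ext i j; fin_cases i <;> fin_cases j <;> simp [ha, hc, hd, coe_T_zpow]
  · refine ⟨-g 0 1, Or.inr ?_⟩
    ext i j; fin_cases i <;> fin_cases j <;> simp [ha, hc, hd, coe_T_zpow]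

lemma eq_of_mul_T_zpow_eq_T_zpow_mul {A : SL(2, ℤ)} {m n : ℤ} (h : A * T ^ m = T ^ n * A) :
    m = n := by
  induction A using Matrix.SpecialLinearGroup.fin_two_induction with | h a b c d hdet =>
  have key : !![a, b; c, d] * !![1, m; 0, 1] = !![1, n; 0, 1] * !![a, b; c, d] := by
    rw [← coe_T_zpow, ← coe_T_zpow]
    exact congrArg Subtype.val h
  obtain ⟨⟨hnc, hmn⟩, hcm⟩ : ((n = 0 ∨ c = 0) ∧ a * m + b = b + n * d) ∧ (c = 0 ∨ m = 0) := by
    simpa using key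
  rcases eq_or_ne c 0 with rfl | hc
  · have had : a * d = 1 := by simpa using hdet
    rcases Int.eq_one_or_neg_one_of_mul_eq_one' had with ⟨rfl, rfl⟩ | ⟨rfl, rfl⟩ <;> linarith
  · rw [hcm.resolve_left hc, hnc.resolve_right hc]

end ModularGroup

theorem transvection_pow_not_commutator :
    ∀ k : ℤ, k ≠ 0 →
      ¬ ∃ A B : Matrix.SpecialLinearGroup (Fin 2) ℤ,
          transvection ^ k = A * B * A⁻¹ * B⁻¹ := by
  rintro k hk ⟨A, B, h⟩
  rw [transvection_eq_T] at h
  have hAB : A * B = T ^ k * (B * A) := by rw [h]; group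
  have hc : (B * A) 1 0 = 0 := by
    have := Matrix.trace_mul_comm (A : Matrix (Fin 2) (Fin 2) ℤ) B
    rw [← Matrix.SpecialLinearGroup.coe_mul, ← Matrix.SpecialLinearGroup.coe_mul, hAB,
      trace_T_zpow_mul] at this
    simpa [hk] using this
  obtain ⟨m, hm⟩ := exists_eq_T_zpow_or_neg_of_c_eq_zero hc
  have hconj : A * T ^ m = T ^ (k + m) * A := by
    have : A * (B * A) = T ^ k * (B * A) * A := by rw [← hAB]; group
    rcases hm with hm | hm <;> simpa only [hm, mul_neg, neg_mul, neg_inj, zpow_add] using this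
  have := eq_of_mul_T_zpow_eq_T_zpow_mul hconj
  omega
end

section
/- Let b, d be real numbers with b > 1 and d > 0, let r be a natural number, and let m : {1,…,r} → ℝ with mᵢ ≥ 2 for each i. Set s₁ := ∑ᵢ (1 − 1/mᵢ) and s₂ := ∑ᵢ (1 − 1/mᵢ)². Define K² := d·(8(b−1)² + 8(b−1)s₁ − 2(b−1)s₂) and e := d·(4(b−1)² + 2(b−1)s₁). Then e > 0 and K²/e = 2 + (∑ᵢ (1 − 1/mᵢ²)) / (2(b−1) + s₁). -/
/-! With tᵢ = 1 − 1/mᵢ one has 1 − 1/mᵢ² = tᵢ(2 − tᵢ), so the numerator on the right is 2s₁ − s₂.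
Both K² and e carry the factor 2d(b − 1); cancelling it turns K² into 2(2(b − 1) + s₁) + (2s₁ − s₂)
and e into 2(b − 1) + s₁, which is positive because every tᵢ ≥ 0. -/

open Finset

lemma one_sub_one_div_sq_eq {K : Type*} [Field K] (x : K) :
    1 - 1 / x ^ 2 = 2 * (1 - 1 / x) - (1 - 1 / x) ^ 2 := by
  rw [← one_div_pow]
  ring

lemma sum_one_sub_one_div_sq {ι K : Type*} [Field K] (s : Finset ι) (m : ι → K) :
    ∑ i ∈ s, (1 - 1 / m i ^ 2) = 2 * ∑ i ∈ s, (1 - 1 / m i) - ∑ i ∈ s, (1 - 1 / m i) ^ 2 := by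
  rw [mul_sum, ← sum_sub_distrib]
  exact sum_congr rfl fun i _ => one_sub_one_div_sq_eq (m i)

lemma one_sub_one_div_nonneg {x : ℝ} (hx : 1 ≤ x) : 0 ≤ 1 - 1 / x :=
  sub_nonneg.2 ((div_le_one₀ (by linarith)).2 hx)

lemma slope_ratio_eq_two_add {K : Type*} [Field K] [CharZero K] {β d s₁ s₂ : K}
    (hβ : β ≠ 0) (hd : d ≠ 0) (hs : 2 * β + s₁ ≠ 0) :
    d * (8 * β ^ 2 + 8 * β * s₁ - 2 * β * s₂) / (d * (4 * β ^ 2 + 2 * β * s₁)) =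
      2 + (2 * s₁ - s₂) / (2 * β + s₁) := by
  rw [show d * (4 * β ^ 2 + 2 * β * s₁) = (2 * d * β) * (2 * β + s₁) by ring,
    show d * (8 * β ^ 2 + 8 * β * s₁ - 2 * β * s₂) =
      (2 * d * β) * (2 * (2 * β + s₁) + (2 * s₁ - s₂)) by ring,
    mul_div_mul_left _ _ (by simp [hβ, hd]), add_div, mul_div_cancel_right₀ _ hs]

theorem very_simple_kodaira_slope_formula
    (b d : ℝ) (hb : 1 < b) (hd : 0 < d) (r : ℕ) (m : Fin r → ℝ)
    (hm : ∀ i, 2 ≤ m i)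
    (s₁ s₂ K2 e : ℝ)
    (hs₁ : s₁ = ∑ i : Fin r, (1 - 1 / m i))
    (hs₂ : s₂ = ∑ i : Fin r, (1 - 1 / m i) ^ 2)
    (hK : K2 = d * (8 * (b - 1) ^ 2 + 8 * (b - 1) * s₁ - 2 * (b - 1) * s₂))
    (he : e = d * (4 * (b - 1) ^ 2 + 2 * (b - 1) * s₁)) :
    0 < e ∧
    K2 / e = 2 + (∑ i : Fin r, (1 - 1 / (m i) ^ 2)) / (2 * (b - 1) + s₁) := by
  have hβ : 0 < b - 1 := sub_pos.2 hb
  have hs₁_nonneg : 0 ≤ s₁ :=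
    hs₁ ▸ sum_nonneg fun i _ => one_sub_one_div_nonneg (by linarith [hm i])
  have hden : 0 < 2 * (b - 1) + s₁ := by positivity
  have he_pos : 0 < e := by
    rw [he, show 4 * (b - 1) ^ 2 + 2 * (b - 1) * s₁ = 2 * (b - 1) * (2 * (b - 1) + s₁) by ring]
    positivity
  refine ⟨he_pos, ?_⟩
  rw [sum_one_sub_one_div_sq, ← hs₁, ← hs₂, hK, he]
  exact slope_ratio_eq_two_add hβ.ne' hd.ne' hden.ne'
end
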